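/- Let (Y, d) be a metric space, c': ℝ → Y an isometric embedding, and b > 0. Assume: (i) for all x ∈ Y, diam(π_{c'}(B(x, d(x, c'(ℝ))))) ≤ b, where π_{c'} is nonempty closest-point projection to c'(ℝ) and B(x, r) is the closed ball. Let c: ℝ → Y be another isometric embedding, O = c(0), O' = c'(0) realizing the nearest-point distance between c(ℝ) and c'(ℝ). Suppose there exist P⁺ = c(p⁺) and Q⁺ = c'(q⁺) with p⁺, q⁺ > 0 such that for all x = c(t) with t > p⁺ and all y = c'(s) with s > q⁺, d(x, y) > max{d(O, x), d(O', y)}. Then there is no sequence x_n ∈ c(ℝ) with x_n = c(t_n), t_n > p⁺, and points y_n ∈ π_{c'}(x_n) with y_n = c'(s_n), s_n > q⁺ and d(O', y_n) → ∞. -/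

import Mathlib

open Set Metric Filter

/-- The closest-point projection of `x` to the image of `c`. -/
def proj {Y : Type*} [MetricSpace Y] (c : ℝ → Y) (x : Y) : Set Y :=
  {y ∈ Set.range c | ∀ z ∈ Set.range c, dist x y ≤ dist x z}

/-- The projection of a subset to the image of `c`. -/
def projSet {Y : Type*} [MetricSpace Y] (c : ℝ → Y) (A : Set Y) : Set Y :=
  ⋃ x ∈ A, proj c x

/-! If `x` projects to `y` on `c'` and `O` lies in the ball `B(x, d(x, y))`, then the projection
`O'` of `O` and `y` both lie in the projection of that ball, whose diameter is at most `b` by the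
contraction property. For `x = c t`, `y = c' s` far out, the divergence hypothesis puts
`O = c 0` in that ball, so `d(O', y) ≤ b` for all such pairs and the projections stay bounded. -/

section Projection

variable {Y : Type*} [MetricSpace Y] {c : ℝ → Y} {x y : Y}

theorem infDist_range_eq_dist_of_mem_proj (hy : y ∈ proj c x) :
    infDist x (range c) = dist x y :=
  le_antisymm (infDist_le_dist_of_mem hy.1) ((le_infDist (range_nonempty c)).2 hy.2)

theorem projSet_closedBall_subset (r : ℝ) :
    projSet c (closedBall x r) ⊆ closedBall x (2 * r + dist x (c 0)) := by
  intro y hy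
  simp only [projSet, mem_iUnion] at hy
  obtain ⟨z, hz, ⟨w, rfl⟩, hmin⟩ := hy
  have hzx : dist z x ≤ r := mem_closedBall.mp hz
  have hclosest : dist z (c w) ≤ dist z (c 0) := hmin _ ⟨0, rfl⟩
  rw [mem_closedBall]
  linarith [dist_triangle (c w) z x, dist_triangle z x (c 0), dist_comm z (c w)]

theorem isBounded_projSet_closedBall (r : ℝ) :
    Bornology.IsBounded (projSet c (closedBall x r)) :=
  isBounded_closedBall.subset (projSet_closedBall_subset r)

theorem dist_le_of_mem_proj_of_dist_le {z w : Y} {b : ℝ}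
    (hcontr : diam (projSet c (closedBall x (infDist x (range c)))) ≤ b)
    (hy : y ∈ proj c x) (hz : dist z x ≤ dist x y) (hw : w ∈ proj c z) :
    dist w y ≤ b := by
  rw [infDist_range_eq_dist_of_mem_proj hy] at hcontr
  have hw' : w ∈ projSet c (closedBall x (dist x y)) := mem_biUnion hz hw
  have hy' : y ∈ projSet c (closedBall x (dist x y)) :=
    mem_biUnion (mem_closedBall_self dist_nonneg) hy
  exact (dist_le_diam_of_mem (isBounded_projSet_closedBall _) hw' hy').trans hcontr

end Projection

theorem no_unbounded_projection_general {Y : Type*} [MetricSpace Y]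
    (c c' : ℝ → Y)
    (b : ℝ)
    (hcontr : ∀ x : Y,
      Metric.diam (projSet c' (closedBall x (Metric.infDist x (Set.range c')))) ≤ b)
    (hnearest : ∀ t u : ℝ, dist (c 0) (c' 0) ≤ dist (c t) (c' u))
    (p q : ℝ)
    (hdiv : ∀ t > p, ∀ u > q,
      dist (c t) (c' u) > max (dist (c 0) (c t)) (dist (c' 0) (c' u))) :
    ¬ ∃ (t s : ℕ → ℝ),
        (∀ n, t n > p ∧ s n > q ∧ c' (s n) ∈ proj c' (c (t n))) ∧
        Tendsto (fun n => dist (c' 0) (c' (s n))) atTop atTop := by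
  rintro ⟨t, s, hn, htend⟩
  have hO' : c' 0 ∈ proj c' (c 0) := ⟨⟨0, rfl⟩, by rintro _ ⟨u, rfl⟩; exact hnearest 0 u⟩
  have hbounded : ∀ n, dist (c' 0) (c' (s n)) ≤ b := fun n => by
    obtain ⟨htp, hsq, hproj⟩ := hn n
    have hO : dist (c 0) (c (t n)) ≤ dist (c (t n)) (c' (s n)) :=
      (le_max_left _ _).trans (hdiv _ htp _ hsq).le
    exact dist_le_of_mem_proj_of_dist_le (hcontr _) hproj hO hO'
  obtain ⟨n, hlarge⟩ := (htend.eventually_gt_atTop b).exists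
  exact (hbounded n).not_gt hlarge

/-- Abstract Corollary 4.4: given the contraction property for projection to `c'`, nearest
points `O = c 0`, `O' = c' 0`, and divergence beyond `P⁺ = c(p⁺)`, `Q⁺ = c'(q⁺)`, there is
no sequence of points far out on `c` whose projections go to infinity along `c'`. -/
theorem no_unbounded_projection {Y : Type*} [MetricSpace Y]
    (c c' : ℝ → Y) (hc : Isometry c) (hc' : Isometry c')
    (hne' : ∀ x : Y, (proj c' x).Nonempty)
    (b : ℝ) (hb : 0 < b)
    (hcontr : ∀ x : Y,
      Metric.diam (projSet c' (closedBall x (Metric.infDist x (Set.range c')))) ≤ b)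
    (hnearest : ∀ t u : ℝ, dist (c 0) (c' 0) ≤ dist (c t) (c' u))
    (p q : ℝ) (hp : 0 < p) (hq : 0 < q)
    (hdiv : ∀ t > p, ∀ u > q,
      dist (c t) (c' u) > max (dist (c 0) (c t)) (dist (c' 0) (c' u))) :
    ¬ ∃ (t s : ℕ → ℝ),
        (∀ n, t n > p ∧ s n > q ∧ c' (s n) ∈ proj c' (c (t n))) ∧
        Tendsto (fun n => dist (c' 0) (c' (s n))) atTop atTop :=
  no_unbounded_projection_general c c' b hcontr hnearest p q hdiv
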